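/- arXiv:2008.09051 — 2 statements merged into one kernel-verified Lean document; each statement's English description precedes it below -/
import Mathlib

section
/- Let n, k be integers with n > 2k and k ≥ 1, and let i, j be integers with 0 ≤ i < j < k. Then the graphs G_i(n,k) and G_j(n,k) are not isomorphic. -/
/-- The involution on `ℕ` swapping `2j ↔ 2j+1` for `j < i`. -/
def sigmaNat (i : ℕ) (x : ℕ) : ℕ :=
  if x < 2 * i then (if x % 2 = 0 then x + 1 else x - 1) else x

lemma sigmaNat_invol (i : ℕ) : Function.Involutive (sigmaNat i) := by
  intro x; unfold sigmaNat; split_ifs <;> omega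

/-- `sigmaNat` restricted to `Fin n` (the identity in the out-of-range degenerate case,
which never occurs when `2 * i ≤ n`). -/
def sigmaFinFun (n i : ℕ) (x : Fin n) : Fin n :=
  if h : sigmaNat i x.val < n then ⟨sigmaNat i x.val, h⟩ else x

lemma sigmaFinFun_invol (n i : ℕ) : Function.Involutive (sigmaFinFun n i) := by
  intro x
  unfold sigmaFinFun
  by_cases h : sigmaNat i x.val < n
  · rw [dif_pos h]
    have h2 : sigmaNat i ((⟨sigmaNat i x.val, h⟩ : Fin n) : ℕ) < n := by
      show sigmaNat i (sigmaNat i x.val) < n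
      rw [sigmaNat_invol]; exact x.isLt
    rw [dif_pos h2]
    ext
    exact sigmaNat_invol i x.val
  · rw [dif_neg h, dif_neg h]

/-- The permutation `σ_i = (1 2)(3 4)⋯(2i-1 2i)` of `[n]`, in `0`-indexed form on `Fin n`:
it swaps `2j ↔ 2j+1` for `j < i` and fixes everything else (assuming `2 * i ≤ n`). -/
def sigmaPerm (n i : ℕ) : Equiv.Perm (Fin n) :=
  Function.Involutive.toPerm _ (sigmaFinFun_invol n i)

/-- The graph `G_i(n,k)`: vertices are the `k`-subsets of `[n]`, with `v` adjacent to `w`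
iff `v ∩ σ_i(w) = ∅`. -/
def GGraph (n k i : ℕ) : SimpleGraph {s : Finset (Fin n) // s.card = k} where
  Adj v w := v ≠ w ∧ Disjoint v.1 (w.1.image (sigmaPerm n i))
  symm := ⟨by
    rintro v w ⟨h1, h2⟩
    refine ⟨h1.symm, ?_⟩
    rw [Finset.disjoint_left] at h2 ⊢
    intro a haw hav
    rcases Finset.mem_image.mp hav with ⟨b, hbv, hba⟩
    refine h2 hbv (Finset.mem_image.mpr ⟨a, haw, ?_⟩)
    rw [← hba]
    exact (sigmaFinFun_invol n i) b⟩
  loopless := ⟨fun _ h => h.1 rfl⟩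

/-!
Let `D` be the disjointness matrix on `k`-subsets (the adjacency matrix of `K(n,k)`) and let
`σ̂` be the action of `σ_i` on `k`-subsets. For `i < k` no `k`-subset is disjoint from its own
`σ_i`-image, so the adjacency matrix of `G_i(n,k)` is `A_i v w = D v (σ̂ w)`. As `σ̂` is an
involution commuting with `D`, `A_i² = D²`, and the isomorphism invariant `tr A_i^(2k+1)` equals
`∑ v, D^(2k+1) v (σ̂ v)`.

Odd powers of `D` strictly decrease when `w` is moved one step towards `v` by exchanging some
`b ∈ w \ v` for some `a ∈ v \ w` (this is where `n > 2k` enters). Passing from `σ_l` to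
`σ_(l+1) = (2l 2l+1) σ_l` moves every `σ_l v` one step away from `v` or leaves it fixed, and
moves some of them, so the trace strictly increases with `i`.
-/

open Finset Matrix

namespace Matrix

variable {ι R : Type*} [Fintype ι] [Semiring R]

lemma trace_reindex_self {κ : Type*} [Fintype κ] (e : ι ≃ κ) (M : Matrix ι ι R) :
    trace (reindex e e M) = trace M :=
  e.symm.sum_comp fun i => M i i

variable [DecidableEq ι]

lemma submatrix_id_perm_sq {N : Matrix ι ι R} {σ : Equiv.Perm ι} (hσ : Function.Involutive σ)
    (hN : N.submatrix σ σ = N) : N.submatrix id σ ^ 2 = N ^ 2 := by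
  have hswap : N.submatrix id σ = N.submatrix σ id := by
    ext x w
    simpa [hσ x] using congr_fun (congr_fun hN (σ x)) w
  conv_lhs => rw [sq]; arg 2; rw [hswap]
  rw [submatrix_mul_equiv, submatrix_id_id, sq]

lemma trace_submatrix_id_perm_pow_odd {N : Matrix ι ι R} {σ : Equiv.Perm ι}
    (hσ : Function.Involutive σ) (hN : N.submatrix σ σ = N) (p : ℕ) :
    trace (N.submatrix id σ ^ (2 * p + 1)) = ∑ v, (N ^ (2 * p + 1)) v (σ v) := by
  rw [pow_succ, pow_mul, submatrix_id_perm_sq hσ hN, ← pow_mul, pow_succ]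
  simp [trace, mul_apply]

end Matrix

lemma SimpleGraph.Iso.trace_adjMatrix_pow {V W R : Type*} [Fintype V] [Fintype W] [DecidableEq V]
    [DecidableEq W] [Semiring R] {G : SimpleGraph V} {H : SimpleGraph W} [DecidableRel G.Adj]
    [DecidableRel H.Adj] (e : G ≃g H) (L : ℕ) :
    trace (G.adjMatrix R ^ L) = trace (H.adjMatrix R ^ L) := by
  rw [← SimpleGraph.Iso.reindex_adjMatrix R e, ← coe_reindexRingEquiv, ← map_pow,
    coe_reindexRingEquiv, trace_reindex_self]

abbrev KSubset (α : Type*) (k : ℕ) := {s : Finset α // s.card = k}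

namespace KSubset

variable {α : Type*} {k : ℕ}

def permMap (π : Equiv.Perm α) : Equiv.Perm (KSubset α k) :=
  π.finsetCongr.subtypeEquiv fun s => by simp

lemma coe_permMap (π : Equiv.Perm α) (v : KSubset α k) :
    (permMap π v).1 = v.1.map π.toEmbedding := rfl

@[simp] lemma mem_permMap {π : Equiv.Perm α} {v : KSubset α k} {x : α} :
    x ∈ (permMap π v).1 ↔ π.symm x ∈ v.1 :=
  mem_map_equiv

lemma mem_permMap_of_apply_eq {π : Equiv.Perm α} {a : α} (hπ : π a = a) {v : KSubset α k} :
    a ∈ (permMap π v).1 ↔ a ∈ v.1 := by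
  rw [mem_permMap, π.symm_apply_eq.mpr hπ.symm]

lemma permMap_mul (π ρ : Equiv.Perm α) (v : KSubset α k) :
    permMap (π * ρ) v = permMap π (permMap ρ v) :=
  Subtype.ext <| Finset.ext fun x => by
    simp only [mem_permMap, Equiv.Perm.mul_def, Equiv.symm_trans_apply]

lemma permMap_involutive {π : Equiv.Perm α} (hπ : Function.Involutive π) :
    Function.Involutive (permMap (k := k) π) := fun v => by
  rw [← permMap_mul, show π * π = 1 from Equiv.ext hπ]
  exact Subtype.ext map_refl

variable [DecidableEq α]

lemma permMap_swap_involutive (a b : α) :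
    Function.Involutive (permMap (k := k) (Equiv.swap a b)) :=
  permMap_involutive (Equiv.swap_apply_self a b)

lemma permMap_swap_of_iff {a b : α} {v : KSubset α k} (h : a ∈ v.1 ↔ b ∈ v.1) :
    permMap (Equiv.swap a b) v = v := by
  refine Subtype.ext (Finset.ext fun x => ?_)
  rw [mem_permMap, Equiv.symm_swap, Equiv.swap_apply_def]
  split_ifs with hxa hxb <;> simp_all

lemma card_inter_permMap_swap_add_one {a b : α} {v x : KSubset α k} (hav : a ∈ v.1)
    (hbv : b ∉ v.1) (hax : a ∈ x.1) (hbx : b ∉ x.1) :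
    #(v.1 ∩ (permMap (Equiv.swap a b) x).1) + 1 = #(v.1 ∩ x.1) := by
  have : v.1 ∩ x.1 = insert a (v.1 ∩ (permMap (Equiv.swap a b) x).1) := by
    ext c
    simp only [mem_inter, mem_insert, mem_permMap, Equiv.symm_swap, Equiv.swap_apply_def]
    split_ifs with hca hcb <;> subst_vars <;> tauto
  rw [this, card_insert_of_notMem]
  simp [hbx]

lemma exists_disjoint_mem_card_inter_eq [Fintype α] {v w : KSubset α k} {a : α} (hav : a ∈ v.1)
    (haw : a ∉ w.1) {s : ℕ} (hs : 1 ≤ s) (hsk : s + #(v.1 ∩ w.1) ≤ k)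
    (hsn : 3 * k ≤ s + Fintype.card α + #(v.1 ∩ w.1)) :
    ∃ x : KSubset α k, Disjoint x.1 w.1 ∧ a ∈ x.1 ∧ #(v.1 ∩ x.1) = s := by
  have hvw : #(v.1 \ w.1) + #(v.1 ∩ w.1) = k := by
    rw [card_sdiff_add_card_inter, v.2]
  have hout : #(v.1 ∪ w.1)ᶜ + 2 * k = Fintype.card α + #(v.1 ∩ w.1) := by
    have := card_union_add_card_inter v.1 w.1
    rw [v.2, w.2] at this
    have := card_le_univ (v.1 ∪ w.1)
    rw [card_compl]
    omega
  -- `x` is made of `s` points of `v \ w` (among them `a`) and `k - s` points outside `v ∪ w`.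
  obtain ⟨A, haA, hAvw, hA⟩ := exists_subsuperset_card_eq (s := {a}) (t := v.1 \ w.1) (n := s)
    (by simpa using mem_sdiff.mpr ⟨hav, haw⟩) (by simpa using hs) (by omega)
  have hAv : A ⊆ v.1 := hAvw.trans sdiff_subset
  have hAout : Disjoint A (v.1 ∪ w.1)ᶜ :=
    disjoint_left.mpr fun c hc hc' => (mem_compl.mp hc') (mem_union_left _ (hAv hc))
  obtain ⟨X, hAX, hX, hXk⟩ :=
    exists_subsuperset_card_eq (s := A) (t := A ∪ (v.1 ∪ w.1)ᶜ) (n := k)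
      subset_union_left (by omega) (by rw [card_union_of_disjoint hAout]; omega)
  refine ⟨⟨X, hXk⟩, disjoint_left.mpr fun c hcX hcw => ?_, hAX (by simpa using haA), ?_⟩
  · rcases mem_union.mp (hX hcX) with hcA | hc
    · exact (mem_sdiff.mp (hAvw hcA)).2 hcw
    · exact mem_compl.mp hc (mem_union_right _ hcw)
  · have : v.1 ∩ X = A := by
      refine Subset.antisymm (fun c hc => ?_) (subset_inter hAv hAX)
      obtain ⟨hcv, hcX⟩ := mem_inter.mp hc
      exact (mem_union.mp (hX hcX)).resolve_right fun h => mem_compl.mp h (mem_union_left _ hcv)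
    rw [this, hA]

end KSubset

section DisjointMatrix

open KSubset

variable (α : Type*) [DecidableEq α] (k : ℕ)

def disjointMatrix : Matrix (KSubset α k) (KSubset α k) ℤ :=
  Matrix.of fun v w => if Disjoint v.1 w.1 then 1 else 0

variable {α k}

@[simp] lemma disjointMatrix_permMap (π : Equiv.Perm α) (v w : KSubset α k) :
    disjointMatrix α k (permMap π v) (permMap π w) = disjointMatrix α k v w := by
  simp [disjointMatrix, coe_permMap, disjoint_map]

variable [Fintype α]

lemma disjointMatrix_pow_succ_permMap_sub (π : Equiv.Perm α) (L : ℕ) (v w : KSubset α k) :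
    (disjointMatrix α k ^ (L + 1)) v (permMap π w) - (disjointMatrix α k ^ (L + 1)) v w =
      ∑ x with Disjoint x.1 w.1,
        ((disjointMatrix α k ^ L) v (permMap π x) - (disjointMatrix α k ^ L) v x) := by
  have hπ : (disjointMatrix α k ^ (L + 1)) v (permMap π w) =
      ∑ x, (disjointMatrix α k ^ L) v (permMap π x) * disjointMatrix α k x w := by
    rw [pow_succ, mul_apply, ← Equiv.sum_comp (permMap π)]
    simp only [disjointMatrix_permMap]
  rw [hπ, pow_succ, mul_apply, ← sum_sub_distrib, sum_filter]
  refine sum_congr rfl fun x _ => ?_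
  simp only [disjointMatrix, of_apply]
  split_ifs <;> ring

variable (a b : α)

/-- The sign `(-1) ^ L` makes this nonnegative when `b ∈ w \ v`: as `w` moves towards `v`,
odd powers of `D` decrease and even ones increase. -/
def swapGap (L : ℕ) (v w : KSubset α k) : ℤ :=
  (-1) ^ L * ((disjointMatrix α k ^ L) v (permMap (Equiv.swap a b) w) -
    (disjointMatrix α k ^ L) v w)

variable {a b}

lemma swapGap_succ (L : ℕ) (v : KSubset α k) {w : KSubset α k} (hbw : b ∈ w.1) :
    swapGap a b (L + 1) v w =
      ∑ x with Disjoint x.1 w.1 ∧ a ∈ x.1, swapGap a b L v (permMap (Equiv.swap a b) x) := by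
  rw [swapGap, disjointMatrix_pow_succ_permMap_sub, mul_sum, ← filter_filter]
  conv_rhs => rw [sum_filter]
  refine sum_congr rfl fun x hx => ?_
  have hbx : b ∉ x.1 := disjoint_right.mp (mem_filter.mp hx).2 hbw
  split_ifs with hax
  · rw [swapGap, permMap_swap_involutive]
    ring
  · rw [permMap_swap_of_iff (iff_of_false hax hbx), sub_self, mul_zero]

lemma swapGap_nonneg {v : KSubset α k} (hbv : b ∉ v.1) (L : ℕ) {w : KSubset α k}
    (hbw : b ∈ w.1) : 0 ≤ swapGap a b L v w := by
  induction L generalizing w with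
  | zero =>
    have hvw : v ≠ w := by rintro rfl; exact hbv hbw
    rw [swapGap, pow_zero, pow_zero, one_apply, one_apply, if_neg hvw]
    split_ifs <;> norm_num
  | succ L ih =>
    rw [swapGap_succ L v hbw]
    refine sum_nonneg fun x hx => ih ?_
    simpa using (mem_filter.mp hx).2.2

lemma swapGap_le_swapGap_succ {v w x : KSubset α k} (hbv : b ∉ v.1) (hbw : b ∈ w.1)
    (hxw : Disjoint x.1 w.1) (hax : a ∈ x.1) (L : ℕ) :
    swapGap a b L v (permMap (Equiv.swap a b) x) ≤ swapGap a b (L + 1) v w := by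
  rw [swapGap_succ L v hbw]
  refine single_le_sum (f := fun x => swapGap a b L v (permMap (Equiv.swap a b) x))
    (fun y hy => swapGap_nonneg hbv L ?_) (mem_filter.mpr ⟨mem_univ x, hxw, hax⟩)
  simpa using (mem_filter.mp hy).2.2

lemma swapGap_one_of_disjoint {v w : KSubset α k} (hav : a ∈ v.1) (hbw : b ∈ w.1)
    (hvw : Disjoint v.1 w.1) : swapGap a b 1 v w = 1 := by
  have hvτw : ¬ Disjoint v.1 (permMap (Equiv.swap a b) w).1 :=
    not_disjoint_iff.mpr ⟨a, hav, by simp [hbw]⟩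
  simp only [swapGap, disjointMatrix, of_apply, pow_one, if_pos hvw, if_neg hvτw]
  norm_num

lemma swapGap_pos (hn : 2 * k < Fintype.card α) {v : KSubset α k} (hav : a ∈ v.1)
    (hbv : b ∉ v.1) (p : ℕ) {w : KSubset α k} (haw : a ∉ w.1) (hbw : b ∈ w.1)
    (hvw : #(v.1 ∩ w.1) ≤ p) : 0 < swapGap a b (2 * p + 1) v w := by
  induction p generalizing w with
  | zero =>
    rw [swapGap_one_of_disjoint hav hbw
      (disjoint_iff_inter_eq_empty.mpr (card_eq_zero.mp (Nat.le_zero.mp hvw)))]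
    exact one_pos
  | succ p ih =>
    set t := #(v.1 ∩ w.1)
    have htk : t < k := v.2 ▸ card_lt_card
      (ssubset_iff_of_subset inter_subset_left |>.mpr ⟨a, hav, fun h => haw (mem_inter.mp h).2⟩)
    -- Two moves towards `v`: `w ↝ y₁` with `#(v ∩ y₁) = k - t - 1`,
    -- then `y₁ ↝ y₂` with `#(v ∩ y₂) = max 1 t - 1 ≤ p`.
    obtain ⟨x₁, hx₁w, hax₁, hvx₁⟩ :=
      exists_disjoint_mem_card_inter_eq hav haw (s := k - t) (by omega) (by omega) (by omega)
    set y₁ := permMap (Equiv.swap a b) x₁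
    have hbx₁ : b ∉ x₁.1 := disjoint_right.mp hx₁w hbw
    have hvy₁ : #(v.1 ∩ y₁.1) + 1 = #(v.1 ∩ x₁.1) :=
      card_inter_permMap_swap_add_one hav hbv hax₁ hbx₁
    have hay₁ : a ∉ y₁.1 := by simp [y₁, hbx₁]
    have hby₁ : b ∈ y₁.1 := by simp [y₁, hax₁]
    obtain ⟨x₂, hx₂y₁, hax₂, hvx₂⟩ :=
      exists_disjoint_mem_card_inter_eq hav hay₁ (s := max 1 t) (by omega) (by omega) (by omega)
    have hbx₂ : b ∉ x₂.1 := disjoint_right.mp hx₂y₁ hby₁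
    have hvy₂ := card_inter_permMap_swap_add_one hav hbv hax₂ hbx₂
    calc 0 < swapGap a b (2 * p + 1) v (permMap (Equiv.swap a b) x₂) :=
          ih (by simp [hbx₂]) (by simp [hax₂]) (by omega)
      _ ≤ swapGap a b (2 * p + 2) v y₁ := swapGap_le_swapGap_succ hbv hby₁ hx₂y₁ hax₂ _
      _ ≤ swapGap a b (2 * (p + 1) + 1) v w := swapGap_le_swapGap_succ hbv hbw hx₁w hax₁ _

lemma disjointMatrix_pow_permMap_swap_lt (hn : 2 * k < Fintype.card α) {v w : KSubset α k}
    (hav : a ∈ v.1) (hbv : b ∉ v.1) (haw : a ∉ w.1) (hbw : b ∈ w.1) :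
    (disjointMatrix α k ^ (2 * k + 1)) v (permMap (Equiv.swap a b) w) <
      (disjointMatrix α k ^ (2 * k + 1)) v w := by
  have h := swapGap_pos hn hav hbv k haw hbw ((card_le_card inter_subset_left).trans_eq v.2)
  rw [swapGap, (odd_two_mul_add_one k).neg_one_pow] at h
  linarith

variable {π : Equiv.Perm α}

lemma disjointMatrix_pow_lt_swap_mul (hn : 2 * k < Fintype.card α) (hπa : π a = a)
    (hπb : π b = b) {v : KSubset α k} (hav : a ∈ v.1) (hbv : b ∉ v.1) :
    (disjointMatrix α k ^ (2 * k + 1)) v (permMap π v) <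
      (disjointMatrix α k ^ (2 * k + 1)) v (permMap (Equiv.swap a b * π) v) := by
  have h := disjointMatrix_pow_permMap_swap_lt hn hav hbv (w := permMap (Equiv.swap a b * π) v)
    (by simpa [permMap_mul, mem_permMap_of_apply_eq hπb] using hbv)
    (by simpa [permMap_mul, mem_permMap_of_apply_eq hπa] using hav)
  rwa [permMap_mul, permMap_swap_involutive, ← permMap_mul] at h

lemma disjointMatrix_pow_le_swap_mul (hn : 2 * k < Fintype.card α) (hπa : π a = a)
    (hπb : π b = b) (v : KSubset α k) :
    (disjointMatrix α k ^ (2 * k + 1)) v (permMap π v) ≤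
      (disjointMatrix α k ^ (2 * k + 1)) v (permMap (Equiv.swap a b * π) v) := by
  by_cases hab : a ∈ v.1 ↔ b ∈ v.1
  · rw [permMap_mul, permMap_swap_of_iff (by
      rwa [mem_permMap_of_apply_eq hπa, mem_permMap_of_apply_eq hπb])]
  · by_cases hav : a ∈ v.1
    · exact (disjointMatrix_pow_lt_swap_mul hn hπa hπb hav (by tauto)).le
    · rw [Equiv.swap_comm]
      exact (disjointMatrix_pow_lt_swap_mul hn hπb hπa (by tauto) hav).le

lemma sum_disjointMatrix_pow_lt_swap_mul (hn : 2 * k < Fintype.card α) (hk : 1 ≤ k)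
    (hab : a ≠ b) (hπa : π a = a) (hπb : π b = b) :
    ∑ v, (disjointMatrix α k ^ (2 * k + 1)) v (permMap π v) <
      ∑ v, (disjointMatrix α k ^ (2 * k + 1)) v (permMap (Equiv.swap a b * π) v) := by
  obtain ⟨u, hau, hub, hu⟩ := exists_subsuperset_card_eq (s := {a}) (t := univ.erase b) (n := k)
    (by simpa using hab) (by simpa using hk)
    (by rw [card_erase_of_mem (mem_univ b), card_univ]; omega)
  exact sum_lt_sum (fun v _ => disjointMatrix_pow_le_swap_mul hn hπa hπb v)
    ⟨⟨u, hu⟩, mem_univ _, disjointMatrix_pow_lt_swap_mul hn hπa hπb (by simpa using hau)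
      fun h => by simpa using hub h⟩

end DisjointMatrix

section Sigma

variable {n : ℕ}

lemma val_sigmaPerm (i : ℕ) (x : Fin n) :
    (sigmaPerm n i x).val = if sigmaNat i x.val < n then sigmaNat i x.val else x.val := by
  change (sigmaFinFun n i x).val = _
  unfold sigmaFinFun
  split_ifs <;> rfl

lemma sigmaPerm_apply_of_le {i : ℕ} {x : Fin n} (hx : 2 * i ≤ x.val) : sigmaPerm n i x = x := by
  ext
  rw [val_sigmaPerm, sigmaNat]
  split_ifs <;> omega

lemma sigmaPerm_succ {l : ℕ} (hl : 2 * l + 2 ≤ n) :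
    sigmaPerm n (l + 1) =
      Equiv.swap ⟨2 * l, by omega⟩ ⟨2 * l + 1, by omega⟩ * sigmaPerm n l := by
  ext x
  rw [Equiv.Perm.mul_apply, Equiv.swap_apply_def]
  split_ifs <;> simp only [Fin.ext_iff, val_sigmaPerm, sigmaNat] at * <;>
    split_ifs at * <;> omega

lemma sigmaPerm_val_div_two (i : ℕ) (x : Fin n) : (sigmaPerm n i x).val / 2 = x.val / 2 := by
  rw [val_sigmaPerm, sigmaNat]
  split_ifs <;> omega

lemma val_lt_of_sigmaPerm_ne {i : ℕ} {x : Fin n} (hx : sigmaPerm n i x ≠ x) :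
    x.val < 2 * i := by
  by_contra h
  exact hx (sigmaPerm_apply_of_le (by omega))

end Sigma

section GGraph

open KSubset

variable {n k : ℕ}

lemma permMap_sigmaPerm_involutive (i : ℕ) :
    Function.Involutive (permMap (k := k) (sigmaPerm n i)) :=
  permMap_involutive (sigmaFinFun_invol n i)

lemma not_disjoint_permMap_sigmaPerm {i : ℕ} (hik : i < k) (v : KSubset (Fin n) k) :
    ¬ Disjoint v.1 (permMap (sigmaPerm n i) v).1 := by
  intro hd
  have hmem : ∀ x ∈ v.1, sigmaPerm n i x ∈ (permMap (sigmaPerm n i) v).1 := fun x hx => by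
    rw [coe_permMap]
    exact mem_map_of_mem _ hx
  have hmove : ∀ x ∈ v.1, sigmaPerm n i x ≠ x := fun x hx h =>
    disjoint_left.mp hd hx (h ▸ hmem x hx)
  -- Two points of `v` in the same pair `{2q, 2q+1}` would be swapped by `σ_i`.
  have hinj : Set.InjOn (fun x : Fin n => x.val / 2) v.1 := by
    intro x hx y hy hxy
    by_contra hne
    have hσx := sigmaPerm_val_div_two i x
    have hσxy : sigmaPerm n i x = y := by
      have := Fin.val_ne_of_ne (hmove x hx)
      have := Fin.val_ne_of_ne hne
      simp only at hxy
      ext; omega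
    exact disjoint_left.mp hd hy (hσxy ▸ hmem x hx)
  have := card_le_card_of_injOn (t := range i) _ (fun x hx => by
    have := val_lt_of_sigmaPerm_ne (hmove x hx)
    simp only [coe_range, Set.mem_Iio]
    omega) hinj
  rw [v.2, card_range] at this
  omega

instance (n k i : ℕ) : DecidableRel (GGraph n k i).Adj := fun v w =>
  inferInstanceAs (Decidable (v ≠ w ∧ Disjoint v.1 (w.1.image (sigmaPerm n i))))

lemma adjMatrix_GGraph {i : ℕ} (hik : i < k) :
    (GGraph n k i).adjMatrix ℤ =
      (disjointMatrix (Fin n) k).submatrix id (permMap (sigmaPerm n i)) := by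
  ext v w
  have hadj : (GGraph n k i).Adj v w ↔ Disjoint v.1 (permMap (sigmaPerm n i) w).1 := by
    rw [coe_permMap, map_eq_image]
    refine ⟨fun h => h.2, fun h => ⟨?_, h⟩⟩
    rintro rfl
    exact not_disjoint_permMap_sigmaPerm hik v (by rwa [coe_permMap, map_eq_image])
  simp [SimpleGraph.adjMatrix_apply, disjointMatrix, hadj]

lemma trace_adjMatrix_GGraph_pow {i : ℕ} (hik : i < k) :
    trace ((GGraph n k i).adjMatrix ℤ ^ (2 * k + 1)) =
      ∑ v, (disjointMatrix (Fin n) k ^ (2 * k + 1)) v (permMap (sigmaPerm n i) v) := by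
  rw [adjMatrix_GGraph hik]
  exact trace_submatrix_id_perm_pow_odd (permMap_sigmaPerm_involutive i)
    (Matrix.ext fun v w => by simp) k

lemma sum_disjointMatrix_pow_sigmaPerm_lt (hn : 2 * k < n) {i j : ℕ} (hij : i < j)
    (hj : j < k) :
    ∑ v, (disjointMatrix (Fin n) k ^ (2 * k + 1)) v (permMap (sigmaPerm n i) v) <
      ∑ v, (disjointMatrix (Fin n) k ^ (2 * k + 1)) v (permMap (sigmaPerm n j) v) := by
  refine strictMonoOn_Iic_of_lt_succ (n := j)
    (ψ := fun l => ∑ v, (disjointMatrix (Fin n) k ^ (2 * k + 1)) v (permMap (sigmaPerm n l) v))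
    (fun l hl => ?_) (Set.mem_Iic.mpr hij.le) (Set.mem_Iic.mpr le_rfl) hij
  rw [Order.succ_eq_add_one, sigmaPerm_succ (by omega)]
  exact sum_disjointMatrix_pow_lt_swap_mul (by simpa using hn) (by omega) (by simp [Fin.ext_iff])
    (sigmaPerm_apply_of_le le_rfl) (sigmaPerm_apply_of_le (by simp))

end GGraph

theorem GGraph_not_iso_general (n k i j : ℕ)
    (hn : 2 * k < n) (hij : i < j) (hj : j < k) :
    ¬ Nonempty (GGraph n k i ≃g GGraph n k j) := by
  rintro ⟨e⟩
  have h := e.trace_adjMatrix_pow (R := ℤ) (2 * k + 1)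
  rw [trace_adjMatrix_GGraph_pow (hij.trans hj), trace_adjMatrix_GGraph_pow hj] at h
  exact (sum_disjointMatrix_pow_sigmaPerm_lt hn hij hj).ne h

/-- for `n > 2k`, `k ≥ 1` and `0 ≤ i < j < k`, the graphs `G_i(n,k)` and
`G_j(n,k)` are not isomorphic. -/
theorem GGraph_not_iso (n k i j : ℕ)
    (hn : 2 * k < n) (hk : 1 ≤ k) (hij : i < j) (hj : j < k) :
    ¬ Nonempty (GGraph n k i ≃g GGraph n k j) :=
  GGraph_not_iso_general n k i j hn hij hj
end

section
/- Let X be a bigraph and let α and β be odd involutions of X such that no vertex x of X is adjacent to α(x) and no vertex x is adjacent to β(x). Then the following are equivalent: (1) X/α and X/β are isomorphic graphs; (2) α and β are evenly conjugate, i.e. there is an even automorphism f of X with f ∘ α = β ∘ f; (3) α and β are conjugate, i.e. there is an automorphism f of X with f ∘ α = β ∘ f. -/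
/-- The setoid on vertices whose classes are the orbits `{x, α x}` of an involution `α`. -/
def orbitSetoid {V : Type*} (α : Equiv.Perm V) (hinv : ∀ x, α (α x) = x) : Setoid V where
  r x y := y = x ∨ y = α x
  iseqv := by
    refine ⟨fun x => Or.inl rfl, ?_, ?_⟩
    · rintro x y (rfl | rfl)
      · exact Or.inl rfl
      · exact Or.inr (hinv x).symm
    · rintro x y z (rfl | rfl) (rfl | rfl)
      · exact Or.inl rfl
      · exact Or.inr rfl
      · exact Or.inr rfl
      · exact Or.inl (hinv x)

/-- The quotient graph `X/α` of a graph `X` by an involution `α` such that no vertex is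
adjacent to its image: vertices are the orbits `{x, α x}`, two orbits being adjacent iff
some element of one is adjacent in `X` to some element of the other. -/
def quotGraph {V : Type*} (X : SimpleGraph V) (α : Equiv.Perm V)
    (hinv : ∀ x, α (α x) = x) (hns : ∀ x, ¬ X.Adj x (α x)) :
    SimpleGraph (Quotient (orbitSetoid α hinv)) where
  Adj a b := ∃ x y, Quotient.mk (orbitSetoid α hinv) x = a ∧
    Quotient.mk (orbitSetoid α hinv) y = b ∧ X.Adj x y
  symm := by refine ⟨?_⟩; rintro a b ⟨x, y, hx, hy, h⟩; exact ⟨y, x, hy, hx, h.symm⟩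
  loopless := by
    refine ⟨?_⟩
    rintro a ⟨x, y, hx, hy, h⟩
    rw [← hx] at hy
    rcases Quotient.exact hy with (h2 | h2)
    · subst h2; exact X.loopless.irrefl _ h
    · subst h2; exact hns y (X.symm.symm _ _ h)


/-! Conjugating automorphisms descend to isomorphisms of the quotients, which gives
(2) ⇒ (3) ⇒ (1). Conversely, since α and β are odd, every orbit `{x, α x}` contains exactly one
vertex of each colour, so an isomorphism `φ : X/α ≅ X/β` lifts to the colour-preserving bijection
sending `x` to the vertex of colour `ε x` in `φ [x]`. It conjugates α to β, and it is an
automorphism because for vertices of different colours, adjacency in `X` is the same as adjacency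
of their orbits in the quotient, while vertices of equal colour are never adjacent. -/

lemma Fin.two_eq_of_ne_of_ne {a b c : Fin 2} (ha : a ≠ c) (hb : b ≠ c) : a = b := by omega

namespace orbitSetoid

variable {V : Type*} {α : Equiv.Perm V} (hαinv : ∀ x, α (α x) = x)

lemma mk_eq_mk_iff {x y : V} :
    Quotient.mk (orbitSetoid α hαinv) x = Quotient.mk _ y ↔ y = x ∨ y = α x :=
  Quotient.eq

lemma mk_apply (x : V) : Quotient.mk (orbitSetoid α hαinv) (α x) = Quotient.mk _ x :=
  (Quotient.sound (Or.inr rfl)).symm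

variable {ε : V → Fin 2}

lemma eq_of_mk_eq_of_color_eq (hαodd : ∀ x, ε (α x) ≠ ε x) {x y : V}
    (h : Quotient.mk (orbitSetoid α hαinv) x = Quotient.mk _ y) (hc : ε x = ε y) : x = y := by
  obtain rfl | rfl := (mk_eq_mk_iff hαinv).1 h
  · rfl
  · exact absurd hc.symm (hαodd x)

/-- The vertex of colour `e` in the orbit `q`, when `α` is odd. -/
noncomputable def rep (ε : V → Fin 2) (q : Quotient (orbitSetoid α hαinv)) (e : Fin 2) : V :=
  if ε q.out = e then q.out else α q.out

lemma mk_rep (q : Quotient (orbitSetoid α hαinv)) (e : Fin 2) :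
    Quotient.mk _ (rep hαinv ε q e) = q := by
  unfold rep
  split_ifs
  · exact q.out_eq
  · rw [mk_apply, q.out_eq]

lemma color_rep (hαodd : ∀ x, ε (α x) ≠ ε x) (q : Quotient (orbitSetoid α hαinv)) (e : Fin 2) :
    ε (rep hαinv ε q e) = e := by
  unfold rep
  split_ifs with h
  · exact h
  · exact Fin.two_eq_of_ne_of_ne (hαodd _) (Ne.symm h)

lemma rep_eq (hαodd : ∀ x, ε (α x) ≠ ε x) {q : Quotient (orbitSetoid α hαinv)} {x : V}
    (hx : Quotient.mk _ x = q) : rep hαinv ε q (ε x) = x :=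
  eq_of_mk_eq_of_color_eq hαinv hαodd (by rw [mk_rep, hx]) (color_rep hαinv hαodd q _)

end orbitSetoid

section quotGraph

variable {V : Type*} {X : SimpleGraph V} {α β : Equiv.Perm V}
  (hαinv : ∀ x, α (α x) = x) (hαns : ∀ x, ¬ X.Adj x (α x))
  (hβinv : ∀ x, β (β x) = x) (hβns : ∀ x, ¬ X.Adj x (β x))

lemma quotGraph_adj_mk_iff (hαaut : ∀ a b, X.Adj (α a) (α b) ↔ X.Adj a b) {x y : V} :
    (quotGraph X α hαinv hαns).Adj (Quotient.mk _ x) (Quotient.mk _ y) ↔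
      X.Adj x y ∨ X.Adj x (α y) := by
  constructor
  · rintro ⟨u, v, hu, hv, huv⟩
    obtain rfl | rfl := (orbitSetoid.mk_eq_mk_iff hαinv).1 hu.symm <;>
      obtain rfl | rfl := (orbitSetoid.mk_eq_mk_iff hαinv).1 hv.symm
    · exact Or.inl huv
    · exact Or.inr huv
    · exact Or.inr ((hαaut _ _).1 (by rwa [hαinv]))
    · exact Or.inl ((hαaut _ _).1 huv)
  · rintro (h | h)
    · exact ⟨x, y, rfl, rfl, h⟩
    · exact ⟨x, α y, rfl, orbitSetoid.mk_apply hαinv y, h⟩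

variable {ε : V → Fin 2}

lemma quotGraph_adj_mk_iff_of_color_ne (hε : ∀ a b, X.Adj a b → ε a ≠ ε b)
    (hαaut : ∀ a b, X.Adj (α a) (α b) ↔ X.Adj a b) (hαodd : ∀ x, ε (α x) ≠ ε x) {x y : V}
    (hxy : ε x ≠ ε y) :
    (quotGraph X α hαinv hαns).Adj (Quotient.mk _ x) (Quotient.mk _ y) ↔ X.Adj x y := by
  rw [quotGraph_adj_mk_iff hαinv hαns hαaut, or_iff_left]
  exact fun h => hε _ _ h (Fin.two_eq_of_ne_of_ne hxy (hαodd y))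

def quotGraphIsoOfConj (hαaut : ∀ a b, X.Adj (α a) (α b) ↔ X.Adj a b)
    (hβaut : ∀ a b, X.Adj (β a) (β b) ↔ X.Adj a b) (f : Equiv.Perm V)
    (hf : ∀ a b, X.Adj (f a) (f b) ↔ X.Adj a b) (hconj : ∀ x, f (α x) = β (f x)) :
    quotGraph X α hαinv hαns ≃g quotGraph X β hβinv hβns where
  toEquiv := Quotient.congr f fun a b => by
    show b = a ∨ b = α a ↔ f b = f a ∨ f b = β (f a)
    rw [← hconj, f.injective.eq_iff, f.injective.eq_iff]
  map_rel_iff' {p q} := by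
    induction p using Quotient.ind
    induction q using Quotient.ind
    simp only [Quotient.congr_mk]
    rw [quotGraph_adj_mk_iff hβinv hβns hβaut, quotGraph_adj_mk_iff hαinv hαns hαaut, ← hconj,
      hf, hf]

variable (hαodd : ∀ x, ε (α x) ≠ ε x) (hβodd : ∀ x, ε (β x) ≠ ε x)

noncomputable def evenLift
    (ψ : Quotient (orbitSetoid α hαinv) ≃ Quotient (orbitSetoid β hβinv)) : Equiv.Perm V where
  toFun x := orbitSetoid.rep hβinv ε (ψ (Quotient.mk _ x)) (ε x)
  invFun y := orbitSetoid.rep hαinv ε (ψ.symm (Quotient.mk _ y)) (ε y)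
  left_inv x := by
    dsimp only
    rw [orbitSetoid.mk_rep, orbitSetoid.color_rep hβinv hβodd, ψ.symm_apply_apply]
    exact orbitSetoid.rep_eq hαinv hαodd rfl
  right_inv y := by
    dsimp only
    rw [orbitSetoid.mk_rep, orbitSetoid.color_rep hαinv hαodd, ψ.apply_symm_apply]
    exact orbitSetoid.rep_eq hβinv hβodd rfl

variable (ψ : Quotient (orbitSetoid α hαinv) ≃ Quotient (orbitSetoid β hβinv))

lemma color_evenLift (x : V) : ε (evenLift hαinv hβinv hαodd hβodd ψ x) = ε x :=
  orbitSetoid.color_rep hβinv hβodd _ _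

lemma mk_evenLift (x : V) :
    Quotient.mk _ (evenLift hαinv hβinv hαodd hβodd ψ x) = ψ (Quotient.mk _ x) :=
  orbitSetoid.mk_rep hβinv _ _

lemma evenLift_conj (x : V) :
    evenLift hαinv hβinv hαodd hβodd ψ (α x) = β (evenLift hαinv hβinv hαodd hβodd ψ x) := by
  refine orbitSetoid.eq_of_mk_eq_of_color_eq hβinv hβodd ?_ ?_
  · rw [orbitSetoid.mk_apply, mk_evenLift, mk_evenLift, orbitSetoid.mk_apply]
  · rw [color_evenLift hαinv hβinv hαodd hβodd]
    exact Fin.two_eq_of_ne_of_ne (hαodd x) (color_evenLift hαinv hβinv hαodd hβodd ψ x ▸ hβodd _)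

lemma evenLift_adj_iff (hε : ∀ a b, X.Adj a b → ε a ≠ ε b)
    (hαaut : ∀ a b, X.Adj (α a) (α b) ↔ X.Adj a b) (hβaut : ∀ a b, X.Adj (β a) (β b) ↔ X.Adj a b)
    (φ : quotGraph X α hαinv hαns ≃g quotGraph X β hβinv hβns) (a b : V) :
    X.Adj (evenLift hαinv hβinv hαodd hβodd φ.toEquiv a)
      (evenLift hαinv hβinv hαodd hβodd φ.toEquiv b) ↔ X.Adj a b := by
  have hc := color_evenLift hαinv hβinv hαodd hβodd φ.toEquiv
  by_cases hab : ε a = ε b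
  · exact iff_of_false (fun h => hε _ _ h (by rw [hc, hc, hab])) (fun h => hε _ _ h hab)
  · rw [← quotGraph_adj_mk_iff_of_color_ne hβinv hβns hε hβaut hβodd (by rwa [hc, hc]),
      mk_evenLift, mk_evenLift,
      ← quotGraph_adj_mk_iff_of_color_ne hαinv hαns hε hαaut hαodd hab]
    exact φ.map_rel_iff

end quotGraph

/-- for odd involutions `α`, `β` of a bigraph `X` with simple quotients, the
following are equivalent: (1) `X/α ≅ X/β`; (2) `α` and `β` are evenly conjugate;
(3) `α` and `β` are conjugate. -/
theorem quot_iso_iff_conj {V : Type*} (X : SimpleGraph V) (ε : V → Fin 2)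
    (hε : ∀ a b, X.Adj a b → ε a ≠ ε b)
    (α : Equiv.Perm V) (hαaut : ∀ a b, X.Adj (α a) (α b) ↔ X.Adj a b)
    (hαinv : ∀ x, α (α x) = x) (hαodd : ∀ x, ε (α x) ≠ ε x)
    (hαns : ∀ x, ¬ X.Adj x (α x))
    (β : Equiv.Perm V) (hβaut : ∀ a b, X.Adj (β a) (β b) ↔ X.Adj a b)
    (hβinv : ∀ x, β (β x) = x) (hβodd : ∀ x, ε (β x) ≠ ε x)
    (hβns : ∀ x, ¬ X.Adj x (β x)) :
    (Nonempty (quotGraph X α hαinv hαns ≃g quotGraph X β hβinv hβns) ↔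
      (∃ f : Equiv.Perm V, (∀ a b, X.Adj (f a) (f b) ↔ X.Adj a b) ∧
        (∀ x, ε (f x) = ε x) ∧ ∀ x, f (α x) = β (f x))) ∧
    ((∃ f : Equiv.Perm V, (∀ a b, X.Adj (f a) (f b) ↔ X.Adj a b) ∧
        (∀ x, ε (f x) = ε x) ∧ ∀ x, f (α x) = β (f x)) ↔
      (∃ f : Equiv.Perm V, (∀ a b, X.Adj (f a) (f b) ↔ X.Adj a b) ∧
        ∀ x, f (α x) = β (f x))) := by
  have lift (φ : quotGraph X α hαinv hαns ≃g quotGraph X β hβinv hβns) :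
      ∃ f : Equiv.Perm V, (∀ a b, X.Adj (f a) (f b) ↔ X.Adj a b) ∧
        (∀ x, ε (f x) = ε x) ∧ ∀ x, f (α x) = β (f x) :=
    ⟨evenLift hαinv hβinv hαodd hβodd φ.toEquiv,
      evenLift_adj_iff hαinv hαns hβinv hβns hαodd hβodd hε hαaut hβaut φ,
      color_evenLift hαinv hβinv hαodd hβodd _, evenLift_conj hαinv hβinv hαodd hβodd _⟩
  have descend (f : Equiv.Perm V) (hf : ∀ a b, X.Adj (f a) (f b) ↔ X.Adj a b)
      (hconj : ∀ x, f (α x) = β (f x)) :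
      Nonempty (quotGraph X α hαinv hαns ≃g quotGraph X β hβinv hβns) :=
    ⟨quotGraphIsoOfConj hαinv hαns hβinv hβns hαaut hβaut f hf hconj⟩
  exact ⟨⟨fun ⟨φ⟩ => lift φ, fun ⟨f, hf, _, hconj⟩ => descend f hf hconj⟩,
    ⟨fun ⟨f, hf, _, hconj⟩ => ⟨f, hf, hconj⟩,
      fun ⟨f, hf, hconj⟩ => let ⟨φ⟩ := descend f hf hconj; lift φ⟩⟩
end
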